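/- Let T be the weighted binary tree with a root of weight 0.02 whose left child and right child are leaves each of weight 0.49. Then T is locally optimal under rotation, i.e. μ(x,T) ≤ 0 for every non-root node x (equivalently, c(T^x) ≥ c(T) for every non-root node x), yet T is not globally optimal: there is a binary tree T' on the same three weighted nodes, preserving their in-order ordering, with c(T') < c(T); indeed c(T) = 1.98 while the tree with a weight-0.49 node at the root, the weight-0.02 node at depth 3 and the other weight-0.49 node at depth 2 has cost 1.53. -/

import Mathlib

/-- Binary trees storing a value (e.g. a weight) at every internal node. -/
inductive BTree (α : Type) where
  | leaf : BTree α
  | node : BTree α → α → BTree α → BTree α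

namespace BTree

/-- The subtree of `t` rooted at the node addressed by the path `p`
(`false` = go left, `true` = go right); `none` if no such node. -/
def subtreeAt {α : Type} : BTree α → List Bool → Option (BTree α)
  | t, [] => some t
  | leaf, _ :: _ => none
  | node l _ _, false :: p => subtreeAt l p
  | node _ _ r, true :: p => subtreeAt r p

/-- The value stored at the node of `t` addressed by `p`, if it exists. -/
def weightAt {α : Type} (t : BTree α) (p : List Bool) : Option α :=
  match subtreeAt t p with
  | some (node _ v _) => some v
  | _ => none

/-- The sum of all weights in the tree. -/
def totalWeight : BTree ℝ → ℝ
  | leaf => 0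
  | node l v r => totalWeight l + v + totalWeight r

/-- `p̄(x)`: the aggregated weight of the subtree rooted at the node addressed
by `p`, with value `0` for an absent node. -/
def subWeight (t : BTree ℝ) (p : List Bool) : ℝ :=
  match subtreeAt t p with
  | some s => totalWeight s
  | none => 0

/-- The weight of the node addressed by `p`, with default `0` for an absent node. -/
def weightD (t : BTree ℝ) (p : List Bool) : ℝ :=
  (weightAt t p).getD 0

/-- The depth of a node addressed by the path `p` (the root has depth 1). -/
def depth (p : List Bool) : ℕ := p.length + 1

/-- `c(T) = Σ_{x ∈ T} d(x) p(x)`, where the root has depth 1. -/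
def cost : BTree ℝ → ℝ
  | leaf => 0
  | node l v r => (totalWeight l + v + totalWeight r) + cost l + cost r

/-- A tree is weighted if its weights are nonnegative and sum to 1. -/
def Weighted (t : BTree ℝ) : Prop :=
  totalWeight t = 1 ∧ ∀ p w, weightAt t p = some w → (0 : ℝ) ≤ w

/-- Right rotation at the node addressed by `q`: replaces the subtree
`a(b(c,d),e)` rooted there by `b(c,a(d,e))`; `none` if the node addressed by
`q` does not exist or has no left child. -/
def rotateRightAt {α : Type} : BTree α → List Bool → Option (BTree α)
  | node (node c pb d) pa e, [] => some (node c pb (node d pa e))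
  | node l v r, false :: p => (rotateRightAt l p).map (fun l' => node l' v r)
  | node l v r, true :: p => (rotateRightAt r p).map (fun r' => node l v r')
  | _, _ => none

/-- Left rotation at the node addressed by `q`: replaces the subtree
`b(c,a(d,e))` rooted there by `a(b(c,d),e)`; `none` if the node addressed by
`q` does not exist or has no right child. -/
def rotateLeftAt {α : Type} : BTree α → List Bool → Option (BTree α)
  | node c pb (node d pa e), [] => some (node (node c pb d) pa e)
  | node l v r, false :: p => (rotateLeftAt l p).map (fun l' => node l' v r)
  | node l v r, true :: p => (rotateLeftAt r p).map (fun r' => node l v r')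
  | _, _ => none

/-- `T^x`: bumping the (non-root) node `x` addressed by `p`, i.e. right
rotation at `π(x)` if `x` is a left child and left rotation at `π(x)` if `x`
is a right child.  Returns `none` iff `p` does not address a non-root node. -/
def bump {α : Type} (t : BTree α) : List Bool → Option (BTree α)
  | [] => none
  | p => if p.getLastD false then rotateLeftAt t p.dropLast
         else rotateRightAt t p.dropLast

/-- The merit `μ(x,T) = p(x) + p̄(λ(x)) − p(π(x)) − p̄(σ(x))` of bumping the
node `x` addressed by `q ++ [dir]` whose parent `π(x)` is addressed by `q`;
`λ(x)` is the like-minded child of `x` and `σ(x)` the sibling of `x`. -/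
def merit (t : BTree ℝ) (q : List Bool) (dir : Bool) : ℝ :=
  weightD t (q ++ [dir]) + subWeight t (q ++ [dir, dir])
    - weightD t q - subWeight t (q ++ [!dir])

/-- The merit of bumping the node addressed by the (nonempty) path `p`. -/
def meritAt (t : BTree ℝ) (p : List Bool) : ℝ :=
  merit t p.dropLast (p.getLastD false)

open Classical in
/-- `β(T)`, the result of bumping `T`: `{T}` if no non-root node has positive
merit, and otherwise the set of all `T^x` for `x` a non-root node of maximal
merit. -/
noncomputable def beta (t : BTree ℝ) : Set (BTree ℝ) :=
  if ∃ p, p ≠ [] ∧ (weightAt t p).isSome ∧ 0 < meritAt t p then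
    {t' | ∃ p, p ≠ [] ∧ (weightAt t p).isSome ∧
      (∀ q, q ≠ [] → (weightAt t q).isSome → meritAt t q ≤ meritAt t p) ∧
      bump t p = some t'}
  else {t}

/-- `β^k(T)`: iterated bumping, `β^0(T) = {T}` and
`β^k(T) = ⋃_{t ∈ β^{k−1}(T)} β(t)`. -/
noncomputable def betaIter (t : BTree ℝ) : ℕ → Set (BTree ℝ)
  | 0 => {t}
  | k + 1 => ⋃ s ∈ betaIter t k, beta s

/-- The number of nodes of a binary tree. -/
def size {α : Type} : BTree α → ℕ
  | leaf => 0
  | node l _ r => size l + 1 + size r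

/-- The in-order traversal of a binary tree. -/
def inorder {α : Type} : BTree α → List α
  | leaf => []
  | node l v r => inorder l ++ v :: inorder r

end BTree

/-! Bumping `x` changes the cost by exactly `-μ(x,T)`: the rotation at `π(x)` lifts `x` and the
subtree `λ(x)` by one level, lowers `π(x)` and the subtree `σ(x)` by one level, and keeps every
other depth. So a tree whose merits are all nonpositive cannot be improved by one rotation. In
the three-node tree each child has merit `0.49 - 0.02 - 0.49 < 0`, yet moving one heavy node to
the root and pushing the light root down two levels lowers the cost from `1.98` to `1.53`. -/

namespace BTree

section Paths

variable {α : Type}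

@[simp]
theorem weightAt_leaf (p : List Bool) : weightAt (leaf : BTree α) p = none := by
  cases p <;> rfl

@[simp]
theorem weightAt_node_nil (l r : BTree α) (v : α) : weightAt (node l v r) [] = some v := rfl

@[simp]
theorem weightAt_node_false (l r : BTree α) (v : α) (p : List Bool) :
    weightAt (node l v r) (false :: p) = weightAt l p := rfl

@[simp]
theorem weightAt_node_true (l r : BTree α) (v : α) (p : List Bool) :
    weightAt (node l v r) (true :: p) = weightAt r p := rfl

theorem mem_inorder_of_weightAt {t : BTree α} {p : List Bool} {w : α}
    (h : weightAt t p = some w) : w ∈ inorder t := by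
  induction t generalizing p with
  | leaf => simp at h
  | node l v r ihl ihr =>
    rcases p with _ | ⟨_ | _, p⟩
    · simp_all [inorder]
    · simp [inorder, ihl h]
    · simp [inorder, ihr h]

theorem isSome_weightAt_of_rotateRightAt {t t' : BTree α} {q : List Bool}
    (h : rotateRightAt t q = some t') : (weightAt t (q ++ [false])).isSome := by
  fun_induction rotateRightAt t q generalizing t' with
  | case1 => rfl
  | case2 l v r p ih | case3 l v r p ih =>
    obtain ⟨_, h', -⟩ := Option.map_eq_some_iff.mp h
    exact ih h'
  | case4 => contradiction

theorem isSome_weightAt_of_rotateLeftAt {t t' : BTree α} {q : List Bool}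
    (h : rotateLeftAt t q = some t') : (weightAt t (q ++ [true])).isSome := by
  fun_induction rotateLeftAt t q generalizing t' with
  | case1 => rfl
  | case2 l v r p ih | case3 l v r p ih =>
    obtain ⟨_, h', -⟩ := Option.map_eq_some_iff.mp h
    exact ih h'
  | case4 => contradiction

theorem bump_concat (t : BTree α) (q : List Bool) (d : Bool) :
    bump t (q ++ [d]) = if d then rotateLeftAt t q else rotateRightAt t q := by
  simp [bump]

theorem exists_concat_of_bump {t t' : BTree α} {p : List Bool} (h : bump t p = some t') :
    ∃ q d, p = q ++ [d] := by
  rcases p.eq_nil_or_concat with rfl | hp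
  · simp [bump] at h
  · simpa using hp

theorem isSome_weightAt_of_bump {t t' : BTree α} {p : List Bool} (h : bump t p = some t') :
    (weightAt t p).isSome := by
  obtain ⟨q, d, rfl⟩ := exists_concat_of_bump h
  rw [bump_concat] at h
  cases d
  · exact isSome_weightAt_of_rotateRightAt h
  · exact isSome_weightAt_of_rotateLeftAt h

theorem eq_nil_or_singleton_of_isSome_weightAt_threeNode {a b c : α} {p : List Bool}
    (h : (weightAt (node (node leaf a leaf) b (node leaf c leaf)) p).isSome) :
    p = [] ∨ p = [false] ∨ p = [true] := by
  rcases p with _ | ⟨_ | _, _ | ⟨_ | _, p⟩⟩ <;> simp_all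

end Paths

theorem merit_node_false (l r : BTree ℝ) (v : ℝ) (q : List Bool) (d : Bool) :
    merit (node l v r) (false :: q) d = merit l q d := rfl

theorem merit_node_true (l r : BTree ℝ) (v : ℝ) (q : List Bool) (d : Bool) :
    merit (node l v r) (true :: q) d = merit r q d := rfl

theorem meritAt_concat (t : BTree ℝ) (q : List Bool) (d : Bool) :
    meritAt t (q ++ [d]) = merit t q d := by
  simp [meritAt]

theorem totalWeight_of_rotateRightAt {t t' : BTree ℝ} {q : List Bool}
    (h : rotateRightAt t q = some t') : totalWeight t' = totalWeight t := by
  fun_induction rotateRightAt t q generalizing t' with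
  | case1 => cases h; simp only [totalWeight]; ring
  | case2 l v r p ih | case3 l v r p ih =>
    obtain ⟨_, h', rfl⟩ := Option.map_eq_some_iff.mp h
    simp only [totalWeight, ih h']
  | case4 => contradiction

theorem totalWeight_of_rotateLeftAt {t t' : BTree ℝ} {q : List Bool}
    (h : rotateLeftAt t q = some t') : totalWeight t' = totalWeight t := by
  fun_induction rotateLeftAt t q generalizing t' with
  | case1 => cases h; simp only [totalWeight]; ring
  | case2 l v r p ih | case3 l v r p ih =>
    obtain ⟨_, h', rfl⟩ := Option.map_eq_some_iff.mp h
    simp only [totalWeight, ih h']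
  | case4 => contradiction

theorem cost_of_rotateRightAt {t t' : BTree ℝ} {q : List Bool}
    (h : rotateRightAt t q = some t') : cost t' = cost t - merit t q false := by
  fun_induction rotateRightAt t q generalizing t' with
  | case1 =>
    cases h
    simp [cost, merit, weightD, weightAt, subWeight, subtreeAt, totalWeight]
    ring
  | case2 l v r p ih | case3 l v r p ih =>
    obtain ⟨_, h', rfl⟩ := Option.map_eq_some_iff.mp h
    simp only [cost, totalWeight_of_rotateRightAt h', ih h', merit_node_false, merit_node_true]
    ring
  | case4 => contradiction

theorem cost_of_rotateLeftAt {t t' : BTree ℝ} {q : List Bool}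
    (h : rotateLeftAt t q = some t') : cost t' = cost t - merit t q true := by
  fun_induction rotateLeftAt t q generalizing t' with
  | case1 =>
    cases h
    simp [cost, merit, weightD, weightAt, subWeight, subtreeAt, totalWeight]
    ring
  | case2 l v r p ih | case3 l v r p ih =>
    obtain ⟨_, h', rfl⟩ := Option.map_eq_some_iff.mp h
    simp only [cost, totalWeight_of_rotateLeftAt h', ih h', merit_node_false, merit_node_true]
    ring
  | case4 => contradiction

theorem cost_of_bump {t t' : BTree ℝ} {p : List Bool} (h : bump t p = some t') :
    cost t' = cost t - meritAt t p := by
  obtain ⟨q, d, rfl⟩ := exists_concat_of_bump h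
  rw [bump_concat] at h
  rw [meritAt_concat]
  cases d
  · exact cost_of_rotateRightAt h
  · exact cost_of_rotateLeftAt h

theorem cost_le_cost_of_bump {t t' : BTree ℝ} {p : List Bool}
    (hlocal : ∀ p, p ≠ [] → (weightAt t p).isSome → meritAt t p ≤ 0)
    (h : bump t p = some t') : cost t ≤ cost t' := by
  obtain ⟨q, d, rfl⟩ := exists_concat_of_bump h
  have := hlocal _ (by simp) (isSome_weightAt_of_bump h)
  rw [cost_of_bump h]
  linarith

theorem meritAt_threeNode_nonpos {a b c : ℝ} (ha : a ≤ b + c) (hc : c ≤ a + b) :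
    ∀ p, p ≠ [] → (weightAt (node (node leaf a leaf) b (node leaf c leaf)) p).isSome →
      meritAt (node (node leaf a leaf) b (node leaf c leaf)) p ≤ 0 := by
  intro p hp hnode
  rcases eq_nil_or_singleton_of_isSome_weightAt_threeNode hnode with rfl | rfl | rfl
  · contradiction
  · simp [meritAt, merit, weightD, weightAt, subWeight, subtreeAt, totalWeight]
    linarith
  · simp [meritAt, merit, weightD, weightAt, subWeight, subtreeAt, totalWeight]
    linarith

end BTree

open BTree in
/-- Let `T` be the weighted binary tree with a root of
weight `0.02` whose left and right children are leaves of weight `0.49` each.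
Then `T` is locally optimal under rotation — `μ(x,T) ≤ 0` for every non-root
node `x`, equivalently `c(T^x) ≥ c(T)` for every non-root node `x` — yet `T`
is not globally optimal: the binary tree `T'` on the same three weighted
nodes, with the same in-order ordering, having a weight-`0.49` node at the
root, the weight-`0.02` node at depth 3 and the other weight-`0.49` node at
depth 2, satisfies `c(T') < c(T)`; indeed `c(T) = 1.98` while `c(T') = 1.53`. -/
theorem locally_optimal_not_optimal :
    let T : BTree ℝ :=
      .node (.node .leaf 0.49 .leaf) 0.02 (.node .leaf 0.49 .leaf)
    let T' : BTree ℝ :=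
      .node .leaf 0.49 (.node (.node .leaf 0.02 .leaf) 0.49 .leaf)
    T.Weighted ∧
    (∀ p, p ≠ [] → (T.weightAt p).isSome → meritAt T p ≤ 0) ∧
    (∀ p T'', T.bump p = some T'' → cost T ≤ cost T'') ∧
    inorder T' = inorder T ∧
    cost T = 1.98 ∧ cost T' = 1.53 ∧ cost T' < cost T := by
  intro T T'
  have hlocal : ∀ p, p ≠ [] → (T.weightAt p).isSome → meritAt T p ≤ 0 :=
    meritAt_threeNode_nonpos (by norm_num) (by norm_num)
  have hcost : cost T = 1.98 := by norm_num [T, cost, totalWeight]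
  have hcost' : cost T' = 1.53 := by norm_num [T', cost, totalWeight]
  refine ⟨⟨by norm_num [T, totalWeight], fun p w hw => ?_⟩, hlocal,
    fun _ _ => cost_le_cost_of_bump hlocal, rfl, hcost, hcost', by rw [hcost, hcost']; norm_num⟩
  have hmem : w ∈ [0.49, 0.02, 0.49] := mem_inorder_of_weightAt hw
  simp only [List.mem_cons, List.not_mem_nil, or_false] at hmem
  rcases hmem with rfl | rfl | rfl <;> norm_num
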